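/- If a random variable ξ satisfies 0 < ‖ξ‖G(ψ) < ∞ where ‖ξ‖G(ψ) = sup_{p∈(a,∞)} (E|ξ|^p)^{1/p}/ψ(p), then its two-sided tail function satisfies T_ξ(x) ≤ exp{−[p ↦ p ln ψ(p)]*(ln(x/‖ξ‖G(ψ)))} for all x ≥ 2‖ξ‖G(ψ), where T_ξ(x) = max(P(ξ > x), P(ξ < −x)) and f* is the Legendre transform. -/

import Mathlib

/-!
Chebyshev–Markov at every moment order `p > a`: `P(|ξ| ≥ x) ≤ (‖ξ‖_p / x)^p ≤ (K ψ(p) / x)^p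
= exp(-(p ln(x/K) - p ln ψ(p)))`. Taking the infimum over `p` turns the exponent into the
Legendre transform of `p ↦ p ln ψ(p)` evaluated at `ln(x/K)`.
-/

open MeasureTheory Set
open scoped ENNReal

lemma ENNReal.le_biSup_div_mul {ι : Type*} {s : Set ι} {f g : ι → ℝ≥0∞} {i : ι} (hi : i ∈ s)
    (hg₀ : g i ≠ 0) (hg : g i ≠ ∞) : f i ≤ (⨆ j ∈ s, f j / g j) * g i :=
  (ENNReal.div_le_iff hg₀ hg).1 (le_biSup (fun j => f j / g j) hi)

lemma Real.rpow_mul_div_eq_exp {c y x : ℝ} (p : ℝ) (hc : 0 < c) (hy : 0 < y) (hx : 0 < x) :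
    (c * y / x) ^ p = Real.exp (-(p * Real.log (x / c) - p * Real.log y)) := by
  rw [Real.rpow_def_of_pos (by positivity), Real.log_div (by positivity) hx.ne',
    Real.log_mul hc.ne' hy.ne', Real.log_div hx.ne' hc.ne']
  ring_nf

section Tails

variable {Ω : Type*} [MeasurableSpace Ω] {μ : Measure Ω} {ξ : Ω → ℝ}

lemma max_measure_tails_le_measure_le_abs (μ : Measure Ω) (ξ : Ω → ℝ) (x : ℝ) :
    max (μ {ω | x < ξ ω}) (μ {ω | ξ ω < -x}) ≤ μ {ω | x ≤ |ξ ω|} :=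
  max_le (measure_mono fun ω (h : x < ξ ω) => show x ≤ |ξ ω| from h.le.trans (le_abs_self _))
    (measure_mono fun ω (h : ξ ω < -x) => show x ≤ |ξ ω| by linarith [neg_abs_le (ξ ω)])

lemma measure_le_abs_le_of_eLpNorm_le (hξ : AEStronglyMeasurable ξ μ) {p C x : ℝ}
    (hp : 0 < p) (hC : 0 ≤ C) (hx : 0 < x) (h : eLpNorm ξ (ENNReal.ofReal p) μ ≤ ENNReal.ofReal C) :
    μ {ω | x ≤ |ξ ω|} ≤ ENNReal.ofReal ((C / x) ^ p) := by
  have hset : {ω | x ≤ |ξ ω|} = {ω | ENNReal.ofReal x ≤ ‖ξ ω‖ₑ} := by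
    ext ω
    simp only [mem_ofPred_eq, Real.enorm_eq_ofReal_abs, ENNReal.ofReal_le_ofReal_iff (abs_nonneg _)]
  have markov := meas_ge_le_mul_pow_eLpNorm_enorm μ (by simpa using hp) ENNReal.ofReal_ne_top hξ
    (ε := ENNReal.ofReal x) (by simpa using hx) (by simp)
  rw [ENNReal.toReal_ofReal hp.le] at markov
  calc μ {ω | x ≤ |ξ ω|}
      ≤ (ENNReal.ofReal x)⁻¹ ^ p * eLpNorm ξ (ENNReal.ofReal p) μ ^ p := hset ▸ markov
    _ ≤ (ENNReal.ofReal x)⁻¹ ^ p * ENNReal.ofReal C ^ p := by gcongr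
    _ = ENNReal.ofReal ((C / x) ^ p) := by
      rw [← ENNReal.ofReal_inv_of_pos hx, ← ENNReal.mul_rpow_of_nonneg _ _ hp.le,
        ← ENNReal.ofReal_mul (by positivity), ENNReal.ofReal_rpow_of_nonneg (by positivity) hp.le,
        inv_mul_eq_div]

end Tails

theorem tail_of_GLS_norm_general {Ω : Type*} [MeasurableSpace Ω] (P : Measure Ω)
    [IsProbabilityMeasure P] (a : ℝ) (ha : 1 ≤ a) (ψ : ℝ → ℝ)
    (hψone : ∀ p ∈ Set.Ioi a, 1 ≤ ψ p)
    (ξ : Ω → ℝ) (hξ : Measurable ξ) (K : ℝ≥0∞)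
    (hK : K = ⨆ p ∈ Set.Ioi a, eLpNorm ξ (ENNReal.ofReal p) P / ENNReal.ofReal (ψ p))
    (hKpos : 0 < K) (hKfin : K < ∞) :
    ∀ x : ℝ, 2 * K.toReal ≤ x →
      max (P {ω | x < ξ ω}) (P {ω | ξ ω < -x}) ≤
        ⨅ p ∈ Set.Ioi a, ENNReal.ofReal
          (Real.exp (-(p * Real.log (x / K.toReal) - p * Real.log (ψ p)))) := by
  intro x hx
  have hK₀ : 0 < K.toReal := ENNReal.toReal_pos hKpos.ne' hKfin.ne
  have hx₀ : 0 < x := by linarith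
  refine le_iInf₂ fun p hp => ?_
  have hp₀ : 0 < p := by linarith [mem_Ioi.1 hp]
  have hψ₀ : 0 < ψ p := by linarith [hψone p hp]
  have hmoment : eLpNorm ξ (ENNReal.ofReal p) P ≤ ENNReal.ofReal (K.toReal * ψ p) := by
    rw [ENNReal.ofReal_mul hK₀.le, ENNReal.ofReal_toReal hKfin.ne, hK]
    exact ENNReal.le_biSup_div_mul hp (by simpa using hψ₀) ENNReal.ofReal_ne_top
  calc max (P {ω | x < ξ ω}) (P {ω | ξ ω < -x})
      ≤ P {ω | x ≤ |ξ ω|} := max_measure_tails_le_measure_le_abs P ξ x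
    _ ≤ ENNReal.ofReal ((K.toReal * ψ p / x) ^ p) :=
      measure_le_abs_le_of_eLpNorm_le hξ.aestronglyMeasurable hp₀ (by positivity) hx₀ hmoment
    _ = _ := by rw [Real.rpow_mul_div_eq_exp p hK₀ hψ₀ hx₀]

/-- Tail estimate from a finite Grand Lebesgue norm: if
`0 < ‖ξ‖G(ψ) < ∞` with `‖ξ‖G(ψ) = sup_{p > a} |ξ|_p / ψ(p)`, then
`T_ξ(x) ≤ exp(−[p ↦ p ln ψ(p)]*(ln(x/‖ξ‖G(ψ))))` for `x ≥ 2‖ξ‖G(ψ)`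
(the Legendre-transform bound being written as the equivalent infimum over `p > a`). -/
theorem tail_of_GLS_norm {Ω : Type*} [MeasurableSpace Ω] (P : Measure Ω)
    [IsProbabilityMeasure P] (a : ℝ) (ha : 1 ≤ a) (ψ : ℝ → ℝ)
    (hψcont : ContinuousOn ψ (Set.Ioi a)) (hψone : ∀ p ∈ Set.Ioi a, 1 ≤ ψ p)
    (hψinf : (⨅ p : Set.Ioi a, ψ p) = 1)
    (ξ : Ω → ℝ) (hξ : Measurable ξ) (K : ℝ≥0∞)
    (hK : K = ⨆ p ∈ Set.Ioi a, eLpNorm ξ (ENNReal.ofReal p) P / ENNReal.ofReal (ψ p))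
    (hKpos : 0 < K) (hKfin : K < ∞) :
    ∀ x : ℝ, 2 * K.toReal ≤ x →
      max (P {ω | x < ξ ω}) (P {ω | ξ ω < -x}) ≤
        ⨅ p ∈ Set.Ioi a, ENNReal.ofReal
          (Real.exp (-(p * Real.log (x / K.toReal) - p * Real.log (ψ p)))) :=
  tail_of_GLS_norm_general P a ha ψ hψone ξ hξ K hK hKpos hKfin
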